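/- Let A = [A_{i,j}]_{i,j=1}^m ∈ M_m(M_n) be positive semidefinite, and let Ã ∈ M_n(M_m) be its realignment, defined by Ã = [B_{r,s}]_{r,s=1}^n where B_{r,s} = [a^{i,j}_{r,s}]_{i,j=1}^m and a^{i,j}_{r,s} denotes the (r,s) entry of the block A_{i,j}. Then (tr A) I_{nm} + (tr₁ A) ⊗ I_m ≥ I_n ⊗ (tr₂ A) + Ã. -/

import Mathlib

/-!
Write `N(A) = (tr A) I + (tr₁ A) ⊗ I - I ⊗ (tr₂ A)`, so that the claim is `Ã ≤ N(A)`. Both sides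
are additive in `A` and every positive semidefinite `A` is a sum of matrices `a a*`, so it suffices
to treat `A = a a*`; then `Ã = ã ã*` with `ã (r, i) = a (i, r)`.

For any positive semidefinite `A`, `N(A) = tr₁ A ⊗ I + I ⊗ (tr (tr₂ A) I - tr₂ A)` is positive
semidefinite, because `tr₂ A ≤ tr (tr₂ A) I`. For `A = a a*` the two partial-trace terms agree on
`ã` (both give `V V* V`, where `V` is `a` read as an `m × n` matrix), so `N(A) ã = ‖ã‖² ã`.
Finally, a positive semidefinite `N` having an eigenvector `u` with eigenvalue `‖u‖²` satisfies
`u u* ≤ N`: the difference is `N` compressed to the orthogonal complement of `u`.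
-/

open Matrix Kronecker
open scoped ComplexOrder

/-- The first partial trace of an `m × m` block matrix with `n × n` blocks:
the sum of the diagonal blocks. -/
noncomputable def ptrace1 (m n : ℕ) (A : Matrix (Fin m × Fin n) (Fin m × Fin n) ℂ) :
    Matrix (Fin n) (Fin n) ℂ :=
  Matrix.of fun r s => ∑ i, A (i, r) (i, s)

/-- The second partial trace of an `m × m` block matrix with `n × n` blocks:
the `m × m` matrix of traces of the blocks. -/
noncomputable def ptrace2 (m n : ℕ) (A : Matrix (Fin m × Fin n) (Fin m × Fin n) ℂ) :
    Matrix (Fin m) (Fin m) ℂ :=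
  Matrix.of fun i j => ∑ r, A (i, r) (j, r)

/-- The realignment `Ã ∈ Mₙ(Mₘ)` of `A ∈ Mₘ(Mₙ)`: the `(r,s)` block of `Ã`
is the `m × m` matrix `[a^{i,j}_{r,s}]_{i,j}`. -/
noncomputable def realign (m n : ℕ) (A : Matrix (Fin m × Fin n) (Fin m × Fin n) ℂ) :
    Matrix (Fin n × Fin m) (Fin n × Fin m) ℂ :=
  Matrix.of fun p q => A (p.2, p.1) (q.2, q.1)

section PosSemidef

variable {n 𝕜 : Type*} [Fintype n] [RCLike 𝕜]

open MatrixOrder in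
theorem Matrix.PosSemidef.posSemidef_trace_smul_one_sub [DecidableEq n] {B : Matrix n n 𝕜}
    (hB : B.PosSemidef) : (B.trace • (1 : Matrix n n 𝕜) - B).PosSemidef := by
  have hle : B ≤ algebraMap ℝ (Matrix n n 𝕜) (∑ i, hB.1.eigenvalues i) := by
    refine le_algebraMap_of_spectrum_le fun x hx => ?_
    obtain ⟨i, rfl⟩ := hB.1.spectrum_real_eq_range_eigenvalues ▸ hx
    exact Finset.single_le_sum (fun j _ => hB.eigenvalues_nonneg j) (Finset.mem_univ i)
  rw [Matrix.le_iff] at hle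
  convert hle using 2
  rw [hB.1.trace_eq_sum_eigenvalues, Algebra.algebraMap_eq_smul_one, ← RCLike.ofReal_sum,
    RCLike.real_smul_eq_coe_smul (K := 𝕜)]

theorem Matrix.PosSemidef.sub_vecMulVec_of_mulVec_eq {N : Matrix n n 𝕜} (hN : N.PosSemidef)
    {u : n → 𝕜} (hu : N *ᵥ u = (star u ⬝ᵥ u) • u) :
    (N - vecMulVec u (star u)).PosSemidef := by
  classical
  set s := star u ⬝ᵥ u
  set R := vecMulVec u (star u)
  rcases eq_or_ne s 0 with hs | hs
  · rw [dotProduct_star_self_eq_zero] at hs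
    simpa [R, hs] using hN
  have hs_star : star s = s := by rw [← star_dotProduct_star, star_star]
  have hNR : N * R = s • R := by rw [mul_vecMulVec, hu, smul_vecMulVec]
  have hRN : R * N = s • R := by
    rw [vecMulVec_mul, ← hN.1.eq, ← star_mulVec, hu, star_smul, hs_star, vecMulVec_smul]
  have hRR : R * R = s • R := by rw [vecMulVec_mul_vecMulVec, vecMulVec_smul]
  have hR : Rᴴ = R := by simp [R, conjTranspose_vecMulVec]
  -- `Q` is the orthogonal projection onto the complement of `u`; it commutes with `N`.
  set Q := 1 - s⁻¹ • R
  have hQ : Qᴴ = Q := by simp [Q, hR, hs_star]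
  have hcompress : Qᴴ * N * Q = N - R := by
    simp only [hQ, Q, sub_mul, mul_sub, one_mul, mul_one, Matrix.smul_mul, Matrix.mul_smul, hNR,
      hRN, hRR, smul_smul, inv_mul_cancel₀ hs, one_smul]
    abel
  simpa [hcompress] using hN.conjTranspose_mul_mul_same Q

end PosSemidef

section PartialTrace

variable {m n : ℕ}

theorem ptrace1_eq_sum_submatrix (A : Matrix (Fin m × Fin n) (Fin m × Fin n) ℂ) :
    ptrace1 m n A = ∑ i, A.submatrix (Prod.mk i) (Prod.mk i) := by
  ext r s
  simp [ptrace1, Matrix.sum_apply]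

theorem ptrace2_eq_sum_submatrix (A : Matrix (Fin m × Fin n) (Fin m × Fin n) ℂ) :
    ptrace2 m n A = ∑ r, A.submatrix (fun i => (i, r)) (fun i => (i, r)) := by
  ext i j
  simp [ptrace2, Matrix.sum_apply]

theorem posSemidef_ptrace1 {A : Matrix (Fin m × Fin n) (Fin m × Fin n) ℂ} (hA : A.PosSemidef) :
    (ptrace1 m n A).PosSemidef := by
  rw [ptrace1_eq_sum_submatrix]
  exact posSemidef_sum _ fun i _ => hA.submatrix _

theorem posSemidef_ptrace2 {A : Matrix (Fin m × Fin n) (Fin m × Fin n) ℂ} (hA : A.PosSemidef) :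
    (ptrace2 m n A).PosSemidef := by
  rw [ptrace2_eq_sum_submatrix]
  exact posSemidef_sum _ fun r _ => hA.submatrix _

theorem trace_ptrace2 (A : Matrix (Fin m × Fin n) (Fin m × Fin n) ℂ) :
    (ptrace2 m n A).trace = A.trace := by
  simp [ptrace2, Matrix.trace, Fintype.sum_prod_type]

theorem posSemidef_trace_smul_one_add_ptrace1_kronecker_one_sub
    {A : Matrix (Fin m × Fin n) (Fin m × Fin n) ℂ} (hA : A.PosSemidef) :
    (A.trace • 1 + ptrace1 m n A ⊗ₖ 1 - 1 ⊗ₖ ptrace2 m n A).PosSemidef := by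
  have hsplit : (1 : Matrix (Fin n) (Fin n) ℂ) ⊗ₖ ((ptrace2 m n A).trace • 1 - ptrace2 m n A)
      = A.trace • 1 - 1 ⊗ₖ ptrace2 m n A := by
    rw [eq_sub_iff_add_eq, ← kronecker_add, sub_add_cancel, kronecker_smul, one_kronecker_one,
      trace_ptrace2]
  rw [add_comm, add_sub_assoc, ← hsplit]
  exact ((posSemidef_ptrace1 hA).kronecker .one).add
    (PosSemidef.one.kronecker (posSemidef_ptrace2 hA).posSemidef_trace_smul_one_sub)

end PartialTrace

noncomputable def realignmentGap (m n : ℕ) :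
    Matrix (Fin m × Fin n) (Fin m × Fin n) ℂ →+ Matrix (Fin n × Fin m) (Fin n × Fin m) ℂ :=
  AddMonoidHom.mk'
    (fun A => A.trace • 1 + ptrace1 m n A ⊗ₖ 1 - (1 ⊗ₖ ptrace2 m n A + realign m n A))
    fun A B => by
      ext p q
      simp only [ptrace1, ptrace2, realign, trace_add, add_smul, Matrix.add_apply,
        Finset.sum_add_distrib, Matrix.sub_apply, Matrix.smul_apply, smul_eq_mul,
        kroneckerMap_apply, of_apply]
      ring

theorem realignmentGap_apply {m n : ℕ} (A : Matrix (Fin m × Fin n) (Fin m × Fin n) ℂ) :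
    realignmentGap m n A
      = A.trace • 1 + ptrace1 m n A ⊗ₖ 1 - (1 ⊗ₖ ptrace2 m n A + realign m n A) :=
  rfl

section RankOne

variable {m n : ℕ} (a : Fin m × Fin n → ℂ)

theorem realign_vecMulVec :
    realign m n (vecMulVec a (star a)) = vecMulVec (a ∘ Prod.swap) (star (a ∘ Prod.swap)) :=
  rfl

theorem ptrace1_kronecker_one_mulVec_eq_one_kronecker_ptrace2_mulVec :
    (ptrace1 m n (vecMulVec a (star a)) ⊗ₖ 1) *ᵥ (a ∘ Prod.swap)
      = (1 ⊗ₖ ptrace2 m n (vecMulVec a (star a))) *ᵥ (a ∘ Prod.swap) := by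
  ext ⟨r, i⟩
  simp only [mulVec, dotProduct, ptrace1, ptrace2, Fintype.sum_prod_type, kroneckerMap_apply,
    one_apply, of_apply, vecMulVec_apply, Pi.star_apply, Function.comp_apply, Prod.swap_prod_mk,
    mul_ite, ite_mul, mul_one, one_mul, mul_zero, zero_mul, Finset.sum_ite_eq, Finset.sum_ite_irrel,
    Finset.sum_const_zero, Finset.mem_univ, if_true, Finset.sum_mul]
  rw [Finset.sum_comm]
  exact Finset.sum_congr rfl fun s _ => Finset.sum_congr rfl fun t _ => by ring

theorem trace_smul_one_add_ptrace1_kronecker_one_sub_mulVec :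
    (trace (vecMulVec a (star a)) • 1 + ptrace1 m n (vecMulVec a (star a)) ⊗ₖ 1
        - 1 ⊗ₖ ptrace2 m n (vecMulVec a (star a))) *ᵥ (a ∘ Prod.swap)
      = (star (a ∘ Prod.swap) ⬝ᵥ (a ∘ Prod.swap)) • (a ∘ Prod.swap) := by
  have hnorm : star (a ∘ Prod.swap) ⬝ᵥ (a ∘ Prod.swap) = a ⬝ᵥ star a := by
    rw [dotProduct_comm]
    exact Fintype.sum_equiv (Equiv.prodComm _ _) _ _ fun _ => rfl
  rw [sub_mulVec, add_mulVec, ptrace1_kronecker_one_mulVec_eq_one_kronecker_ptrace2_mulVec,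
    add_sub_cancel_right, smul_mulVec, one_mulVec, trace_vecMulVec, hnorm]

theorem posSemidef_realignmentGap_vecMulVec :
    (realignmentGap m n (vecMulVec a (star a))).PosSemidef := by
  rw [realignmentGap_apply, ← sub_sub, realign_vecMulVec]
  exact (posSemidef_trace_smul_one_add_ptrace1_kronecker_one_sub
    (posSemidef_vecMulVec_self_star a)).sub_vecMulVec_of_mulVec_eq
    (trace_smul_one_add_ptrace1_kronecker_one_sub_mulVec a)

end RankOne

/-- If `A` is positive semidefinite, then
`(tr A) I_{nm} + (tr₁ A) ⊗ Iₘ ≥ Iₙ ⊗ (tr₂ A) + Ã`. -/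
theorem stmt_11 (m n : ℕ) (A : Matrix (Fin m × Fin n) (Fin m × Fin n) ℂ)
    (hA : A.PosSemidef) :
    (A.trace • (1 : Matrix (Fin n × Fin m) (Fin n × Fin m) ℂ)
      + ptrace1 m n A ⊗ₖ (1 : Matrix (Fin m) (Fin m) ℂ)
      - ((1 : Matrix (Fin n) (Fin n) ℂ) ⊗ₖ ptrace2 m n A + realign m n A)).PosSemidef := by
  obtain ⟨k, a, rfl⟩ := posSemidef_iff_eq_sum_vecMulVec.mp hA
  rw [← realignmentGap_apply, map_sum]
  exact posSemidef_sum _ fun i _ => posSemidef_realignmentGap_vecMulVec (a i)
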